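/- Nonregular decoupling feedback (Theorem 2.9). Let A ∈ ℝ^{n×n}, B ∈ ℝ^{n×m}, C ∈ ℝ^{p×n} with p < m, such that every relative order d_i exists (d_i ≤ n and C_i A^{d_i−1} B ≠ 0). Suppose rank B* = p and the submatrix B̄* ∈ ℝ^{p×p} formed by the first p columns of B* is invertible; write B̃* ∈ ℝ^{p×(m−p)} for the matrix of the remaining m−p columns of B*. For an arbitrary matrix K₂ ∈ ℝ^{(m−p)×n}, define F ∈ ℝ^{m×n} as the block-stack of −(B̄*)⁻¹(A* + B̃* K₂) on top of K₂, and G ∈ ℝ^{m×p} as the block-stack of (B̄*)⁻¹ on top of the zero matrix. Then over ℝ(s) the closed-loop transfer function C (sI − A − BF)⁻¹ B G equals diag(s^{−d_1}, …, s^{−d_p}). -/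

import Mathlib

noncomputable section
open Matrix

/-- Entrywise embedding of a real matrix into matrices over the field ℝ(s). -/
noncomputable def toRat {k l : ℕ} (M : Matrix (Fin k) (Fin l) ℝ) :
    Matrix (Fin k) (Fin l) (RatFunc ℝ) :=
  M.map (algebraMap ℝ (RatFunc ℝ))

/-- The matrix `s I - M` over ℝ(s). -/
noncomputable def sIm {k : ℕ} (M : Matrix (Fin k) (Fin k) ℝ) :
    Matrix (Fin k) (Fin k) (RatFunc ℝ) :=
  Matrix.scalar (Fin k) (RatFunc.X : RatFunc ℝ) - toRat M

/-!
Write `A_cl = A + B F`. The block forms of `F` and `G` give `B* F = -A*` and `B* G = I`.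
Because `Cᵢ A^k B = 0` for `k + 1 < dᵢ`, the feedback leaves `Cᵢ A_cl^k = Cᵢ A^k` for
`k < dᵢ`, and then `Cᵢ A_cl^dᵢ = A*ᵢ + B*ᵢ F = 0`. For a row `c` with `c M^d = 0` the
geometric sum inverts `sI - M` on `c`: `c (sI - M)⁻¹ = ∑_{k<d} s^(-k-1) c M^k`. Multiplying
by `B G`, only the term `k = dᵢ - 1` survives, and it is `s^(-dᵢ) B*ᵢ G = s^(-dᵢ) eᵢ`.
-/

section Transfer

variable {K : Type*} [Field K] {ι κ : Type*} [Fintype ι] [DecidableEq ι]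

theorem vecMul_scalar (c : ι → K) (x : K) : c ᵥ* scalar ι x = x • c := by
  rw [scalar_apply, vecMul_diagonal_const, op_smul_eq_smul]

theorem vecMul_inv_scalar_sub_mul {M : Matrix ι ι K} {N : Matrix ι κ K} {c : ι → K}
    {e : κ → K} {x : K} {d : ℕ} (hx : x ≠ 0) (hdet : IsUnit (scalar ι x - M).det)
    (hd : 0 < d) (hzero : c ᵥ* M ^ d = 0) (hlow : ∀ k, k + 1 < d → c ᵥ* M ^ k ᵥ* N = 0)
    (hlast : c ᵥ* M ^ (d - 1) ᵥ* N = e) :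
    c ᵥ* ((scalar ι x - M)⁻¹ * N) = (x ^ d)⁻¹ • e := by
  let S := ∑ k ∈ Finset.range d, scalar ι x ^ k * M ^ (d - 1 - k)
  have hgeom : S * (scalar ι x - M) = scalar ι x ^ d - M ^ d :=
    (scalar_commute x (Commute.all x) M).geom_sum₂_mul d
  have hc : c = (x ^ d)⁻¹ • (c ᵥ* (S * (scalar ι x - M))) := by
    rw [hgeom, vecMul_sub, hzero, sub_zero, ← map_pow, vecMul_scalar,
      inv_smul_smul₀ (pow_ne_zero d hx)]
  have hSN : c ᵥ* (S * N) = e := by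
    rw [show S = ∑ k ∈ Finset.range d, scalar ι x ^ k * M ^ (d - 1 - k) from rfl,
      Matrix.sum_mul, vecMul_sum, Finset.sum_eq_single_of_mem 0 (Finset.mem_range.mpr hd)]
    · simpa [vecMul_vecMul] using hlast
    · intro k hk hk0
      have hk : k < d := Finset.mem_range.mp hk
      rw [← map_pow, Matrix.mul_assoc, ← vecMul_vecMul, vecMul_scalar, smul_vecMul,
        ← vecMul_vecMul, hlow _ (by omega), smul_zero]
  calc c ᵥ* ((scalar ι x - M)⁻¹ * N)
      = (x ^ d)⁻¹ • (c ᵥ* (S * (scalar ι x - M) * (scalar ι x - M)⁻¹ * N)) := by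
        conv_lhs => rw [hc]
        rw [smul_vecMul, vecMul_vecMul, Matrix.mul_assoc, Matrix.mul_assoc, Matrix.mul_assoc]
    _ = (x ^ d)⁻¹ • e := by
        rw [Matrix.mul_nonsing_inv_cancel_right _ _ hdet, hSN]

theorem mul_inv_scalar_sub_mul_eq_diagonal [DecidableEq κ] {C : Matrix κ ι K}
    {M : Matrix ι ι K} {N : Matrix ι κ K} {x : K} {d : κ → ℕ} (hx : x ≠ 0)
    (hdet : IsUnit (scalar ι x - M).det) (hd : ∀ i, 0 < d i)
    (hzero : ∀ i, (C * M ^ d i) i = 0) (hlow : ∀ i k, k + 1 < d i → (C * M ^ k * N) i = 0)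
    (hlast : ∀ i, (C * M ^ (d i - 1) * N) i = (1 : Matrix κ κ K) i) :
    C * (scalar ι x - M)⁻¹ * N = diagonal fun i => (x ^ d i)⁻¹ := by
  funext i
  rw [Matrix.mul_assoc, mul_apply_eq_vecMul,
    vecMul_inv_scalar_sub_mul hx hdet (hd i) (hzero i) (hlow i) (hlast i)]
  ext j
  simp [diagonal_apply, one_apply]

end Transfer

section Feedback

variable {R : Type*} [Ring R] {ι μ κ : Type*} [Fintype ι] [DecidableEq ι] [Fintype μ]

def bStar (C : Matrix κ ι R) (A : Matrix ι ι R) (B : Matrix ι μ R) (d : κ → ℕ) :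
    Matrix κ μ R :=
  of fun i => (C * A ^ (d i - 1) * B) i

def aStar (C : Matrix κ ι R) (A : Matrix ι ι R) (d : κ → ℕ) : Matrix κ ι R :=
  of fun i => (C * A ^ d i) i

variable {A : Matrix ι ι R} {B : Matrix ι μ R} {c : ι → R} {d : ℕ}

theorem vecMul_add_mul_pow_of_lt (F : Matrix μ ι R)
    (hlow : ∀ k, k + 1 < d → c ᵥ* A ^ k ᵥ* B = 0) :
    ∀ k < d, c ᵥ* (A + B * F) ^ k = c ᵥ* A ^ k := by
  intro k
  induction k with
  | zero => simp
  | succ k ih =>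
    intro hk
    rw [pow_succ, pow_succ, ← vecMul_vecMul, ih (by omega), vecMul_add, ← vecMul_vecMul,
      hlow k hk, zero_vecMul, add_zero, vecMul_vecMul]

theorem vecMul_add_mul_pow_eq (F : Matrix μ ι R) (hd : 0 < d)
    (hlow : ∀ k, k + 1 < d → c ᵥ* A ^ k ᵥ* B = 0) :
    c ᵥ* (A + B * F) ^ d = c ᵥ* A ^ d + c ᵥ* A ^ (d - 1) ᵥ* B ᵥ* F := by
  obtain ⟨k, rfl⟩ : ∃ k, d = k + 1 := ⟨d - 1, by omega⟩
  rw [pow_succ, ← vecMul_vecMul, vecMul_add_mul_pow_of_lt F hlow k (by omega), vecMul_add,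
    vecMul_vecMul, ← pow_succ, ← vecMul_vecMul, Nat.add_sub_cancel]

end Feedback

theorem mul_inv_scalar_sub_feedback_eq_diagonal {K : Type*} [Field K] {ι μ κ : Type*}
    [Fintype ι] [DecidableEq ι] [Fintype μ] [DecidableEq κ] {C : Matrix κ ι K}
    {A : Matrix ι ι K} {B : Matrix ι μ K} {F : Matrix μ ι K} {G : Matrix μ κ K}
    {d : κ → ℕ} {x : K} (hx : x ≠ 0) (hdet : IsUnit (scalar ι x - (A + B * F)).det)
    (hd : ∀ i, 0 < d i) (hlow : ∀ i k, k + 1 < d i → (C * A ^ k * B) i = 0)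
    (hF : bStar C A B d * F = -aStar C A d) (hG : bStar C A B d * G = 1) :
    C * (scalar ι x - (A + B * F))⁻¹ * (B * G) = diagonal fun i => (x ^ d i)⁻¹ := by
  have hlow_vecMul : ∀ i k, k + 1 < d i → C i ᵥ* A ^ k ᵥ* B = 0 := hlow
  refine mul_inv_scalar_sub_mul_eq_diagonal hx hdet hd (fun i => ?_) (fun i k hk => ?_)
    (fun i => ?_)
  · rw [mul_apply_eq_vecMul, vecMul_add_mul_pow_eq F (hd i) (hlow_vecMul i)]
    exact add_eq_zero_iff_eq_neg'.mpr (congrFun hF i)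
  · rw [mul_apply_eq_vecMul, mul_apply_eq_vecMul,
      vecMul_add_mul_pow_of_lt F (hlow_vecMul i) k (by omega), ← vecMul_vecMul,
      hlow_vecMul i k hk, zero_vecMul]
  · rw [mul_apply_eq_vecMul, mul_apply_eq_vecMul,
      vecMul_add_mul_pow_of_lt F (hlow_vecMul i) _ (Nat.sub_lt (hd i) one_pos),
      ← vecMul_vecMul, ← hG]
    rfl

theorem Fin.sum_univ_castLE_add {M : Type*} [AddCommMonoid M] {p m : ℕ} (h : p ≤ m)
    (g : Fin m → M) :
    ∑ k, g k =
      ∑ a : Fin p, g (Fin.castLE h a) + ∑ b : Fin (m - p), g ⟨p + b, by omega⟩ := by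
  rw [← (finCongr (Nat.add_sub_cancel' h)).sum_comp g, Fin.sum_univ_add]
  rfl

theorem mul_of_dite_lt {R : Type*} [NonUnitalNonAssocSemiring R] {ι κ : Type*} {p m : ℕ}
    (hpm : p ≤ m) (P : Matrix ι (Fin m) R) (U : Matrix (Fin p) κ R)
    (V : Matrix (Fin (m - p)) κ R) :
    P * of (fun (k : Fin m) l =>
        if h : (k : ℕ) < p then U ⟨k, h⟩ l else V ⟨k - p, by omega⟩ l) =
      of (fun i (j : Fin p) => P i (Fin.castLE hpm j)) * U +
        of (fun i (j : Fin (m - p)) => P i ⟨p + j, by omega⟩) * V := by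
  ext i l
  simp [mul_apply, Fin.sum_univ_castLE_add hpm]

section RatFunc

variable {k l r : ℕ}

theorem toRat_add (P Q : Matrix (Fin k) (Fin l) ℝ) : toRat (P + Q) = toRat P + toRat Q :=
  Matrix.map_add _ (map_add _) P Q

theorem toRat_neg (P : Matrix (Fin k) (Fin l) ℝ) : toRat (-P) = -toRat P :=
  Matrix.map_neg _ (map_neg _) P

theorem toRat_mul (P : Matrix (Fin k) (Fin l) ℝ) (Q : Matrix (Fin l) (Fin r) ℝ) :
    toRat (P * Q) = toRat P * toRat Q :=
  Matrix.map_mul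

theorem toRat_pow (M : Matrix (Fin k) (Fin k) ℝ) (r : ℕ) : toRat (M ^ r) = toRat M ^ r :=
  Matrix.map_pow M _ r

theorem toRat_one : toRat (1 : Matrix (Fin k) (Fin k) ℝ) = 1 :=
  Matrix.map_one _ (map_zero _) (map_one _)

theorem toRat_apply_eq_zero {P : Matrix (Fin k) (Fin l) ℝ} {i : Fin k} (h : P i = 0) :
    toRat P i = 0 := by
  ext j
  simp [toRat, h]

theorem bStar_toRat (C : Matrix (Fin r) (Fin k) ℝ) (A : Matrix (Fin k) (Fin k) ℝ)
    (B : Matrix (Fin k) (Fin l) ℝ) (d : Fin r → ℕ) :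
    bStar (toRat C) (toRat A) (toRat B) d = toRat (bStar C A B d) := by
  ext i j
  simp only [bStar, of_apply, ← toRat_pow, ← toRat_mul]
  rfl

theorem aStar_toRat (C : Matrix (Fin r) (Fin k) ℝ) (A : Matrix (Fin k) (Fin k) ℝ)
    (d : Fin r → ℕ) : aStar (toRat C) (toRat A) d = toRat (aStar C A d) := by
  ext i j
  simp only [aStar, of_apply, ← toRat_pow, ← toRat_mul]
  rfl

open Polynomial in
theorem sIm_eq_map_charmatrix (M : Matrix (Fin k) (Fin k) ℝ) :
    sIm M = (charmatrix M).map (algebraMap ℝ[X] (RatFunc ℝ)) := by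
  ext i j
  rcases eq_or_ne i j with rfl | h
  · simp [sIm, toRat, charmatrix_apply_eq, RatFunc.algebraMap_X, RatFunc.algebraMap_C]
  · simp [sIm, toRat, h, RatFunc.algebraMap_C]

theorem det_sIm (M : Matrix (Fin k) (Fin k) ℝ) :
    (sIm M).det = algebraMap (Polynomial ℝ) (RatFunc ℝ) M.charpoly := by
  rw [sIm_eq_map_charmatrix, Matrix.charpoly, RingHom.map_det]
  rfl

theorem isUnit_det_sIm (M : Matrix (Fin k) (Fin k) ℝ) : IsUnit (sIm M).det := by
  rw [det_sIm, isUnit_iff_ne_zero,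
    map_ne_zero_iff _ (IsFractionRing.injective (Polynomial ℝ) (RatFunc ℝ))]
  exact M.charpoly_monic.ne_zero

end RatFunc

/-- Nonregular decoupling feedback (Theorem 2.9): `p < m`, each relative order
`d i` exists, `rank B* = p`, the first `p` columns `B̄*` of `B*` form an invertible
matrix, `B̃*` collects the remaining `m - p` columns.  For any `K₂`, with
`F = [-(B̄*)⁻¹ (A* + B̃* K₂); K₂]` and `G = [(B̄*)⁻¹; 0]`, the closed-loop
transfer function equals `diag (s^{-d 1}, …, s^{-d p})`. -/
theorem nonregular_decoupling_feedback
    (n m p : ℕ) (hpm : p < m)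
    (A : Matrix (Fin n) (Fin n) ℝ) (B : Matrix (Fin n) (Fin m) ℝ)
    (C : Matrix (Fin p) (Fin n) ℝ) (d : Fin p → ℕ)
    (hd1 : ∀ i, 1 ≤ d i)
    (hdmin : ∀ i, ∀ j, 1 ≤ j → j < d i → (fun l => (C * A ^ (j - 1) * B) i l) = 0)
    (Bstar : Matrix (Fin p) (Fin m) ℝ)
    (hBstar : Bstar = Matrix.of fun i j => (C * A ^ (d i - 1) * B) i j)
    (Astar : Matrix (Fin p) (Fin n) ℝ)
    (hAstar : Astar = Matrix.of fun i j => (C * A ^ (d i)) i j)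
    (Bbar : Matrix (Fin p) (Fin p) ℝ)
    (hBbar : Bbar = Matrix.of fun i (j : Fin p) => Bstar i (Fin.castLE hpm.le j))
    (hBbarInv : IsUnit Bbar.det)
    (Btilde : Matrix (Fin p) (Fin (m - p)) ℝ)
    (hBtilde : Btilde = Matrix.of fun i (j : Fin (m - p)) =>
      Bstar i ⟨p + (j : ℕ), by have := j.isLt; omega⟩)
    (K₂ : Matrix (Fin (m - p)) (Fin n) ℝ)
    (F : Matrix (Fin m) (Fin n) ℝ)
    (hF : F = Matrix.of fun (k : Fin m) l =>
      if h : (k : ℕ) < p then (-(Bbar⁻¹ * (Astar + Btilde * K₂))) ⟨(k : ℕ), h⟩ l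
      else K₂ ⟨(k : ℕ) - p, by have := k.isLt; omega⟩ l)
    (G : Matrix (Fin m) (Fin p) ℝ)
    (hG : G = Matrix.of fun (k : Fin m) j =>
      if h : (k : ℕ) < p then Bbar⁻¹ ⟨(k : ℕ), h⟩ j else 0) :
    toRat C * (sIm (A + B * F))⁻¹ * toRat B * toRat G =
      Matrix.diagonal fun i => ((RatFunc.X : RatFunc ℝ) ^ d i)⁻¹ := by
  have hBbar1 : Bbar * Bbar⁻¹ = 1 := mul_nonsing_inv _ hBbarInv
  have hBF : Bstar * F = -Astar := by
    rw [hF, mul_of_dite_lt hpm.le, ← hBbar, ← hBtilde, Matrix.mul_neg, ← Matrix.mul_assoc,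
      hBbar1, Matrix.one_mul]
    abel
  have hBG : Bstar * G = 1 := by
    have hG' : G = of fun (k : Fin m) j => if h : (k : ℕ) < p then Bbar⁻¹ ⟨k, h⟩ j
        else (0 : Matrix (Fin (m - p)) (Fin p) ℝ) ⟨k - p, by omega⟩ j := hG
    rw [hG', mul_of_dite_lt hpm.le, ← hBbar, hBbar1, Matrix.mul_zero, add_zero]
  subst hBstar hAstar
  have hdet := isUnit_det_sIm (A + B * F)
  rw [sIm, toRat_add, toRat_mul] at hdet ⊢
  rw [Matrix.mul_assoc _ (toRat B)]
  refine mul_inv_scalar_sub_feedback_eq_diagonal RatFunc.X_ne_zero hdet hd1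
    (fun i k hk => ?_) ?_ ?_
  · rw [← toRat_pow, ← toRat_mul, ← toRat_mul]
    exact toRat_apply_eq_zero (hdmin i (k + 1) (by omega) hk)
  · rw [bStar_toRat, aStar_toRat, ← toRat_mul, ← toRat_neg]
    exact congrArg toRat hBF
  · rw [bStar_toRat, ← toRat_mul, ← toRat_one]
    exact congrArg toRat hBG
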